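/- arXiv:2504.04364 — 2 statements merged into one kernel-verified Lean document; each statement's English description precedes it below -/
import Mathlib

section
/- If H is a disjoint union of paths with three longest path orders n1 ≥ n2 ≥ n3, and K2 ∨ H contains no t vertex-disjoint copies of P_l, then n1 + n2 + n3 ≤ (t−3)l + 3(l−1). -/
open SimpleGraph

/-- `G` contains a copy of `F` as a subgraph: an injective graph homomorphism. -/
def ContainsCopy {α β : Type*} (F : SimpleGraph α) (G : SimpleGraph β) : Prop :=
  ∃ f : α → β, Function.Injective f ∧ ∀ a b, F.Adj a b → G.Adj (f a) (f b)

/-- The cone over a graph: a new apex vertex joined to every vertex of `H`.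
`cone H = K1 ∨ H`, and `cone (cone H) = K2 ∨ H`. -/
def cone {β : Type*} (H : SimpleGraph β) : SimpleGraph (Option β) :=
  SimpleGraph.fromRel (fun x y =>
    x = none ∨ ∃ a b, x = some a ∧ y = some b ∧ H.Adj a b)

/-- The disjoint union of paths with orders `n 0, n 1, n 2, …`:
for each `i`, the vertices `(i, 0), …, (i, n i - 1)` form a path. -/
def pathsUnion (n : ℕ → ℕ) : SimpleGraph (ℕ × ℕ) :=
  SimpleGraph.fromRel (fun x y => x.1 = y.1 ∧ x.2 + 1 = y.2 ∧ y.2 < n x.1)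

/-- `t` pairwise vertex-disjoint copies of the path `P_l`. -/
def tPaths (t l : ℕ) : SimpleGraph (Fin t × Fin l) :=
  SimpleGraph.fromRel (fun x y => x.1 = y.1 ∧ (x.2 : ℕ) + 1 = (y.2 : ℕ))

/-- The spider (starlike tree) with `t` branches each having `m` vertices
(besides the common center). -/
def spider (t m : ℕ) : SimpleGraph (Option (Fin t × Fin m)) :=
  SimpleGraph.fromRel (fun x y =>
    (x = none ∧ ∃ p : Fin t × Fin m, y = some p ∧ (p.2 : ℕ) = 0) ∨
    (∃ p q : Fin t × Fin m, x = some p ∧ y = some q ∧ p.1 = q.1 ∧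
      (p.2 : ℕ) + 1 = (q.2 : ℕ)))

/-- `F` is a minor of `G`: branch sets realization. -/
def IsMinor {α β : Type*} (F : SimpleGraph α) (G : SimpleGraph β) : Prop :=
  ∃ B : α → G.Subgraph,
    (∀ a, (B a).verts.Nonempty) ∧
    (∀ a, (B a).Connected) ∧
    (∀ a a', a ≠ a' → Disjoint (B a).verts (B a').verts) ∧
    (∀ a a', F.Adj a a' → ∃ u ∈ (B a).verts, ∃ v ∈ (B a').verts, G.Adj u v)

/-- Planarity, via Wagner's forbidden-minor characterization. -/
def IsPlanar {β : Type*} (G : SimpleGraph β) : Prop :=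
  ¬ IsMinor (⊤ : SimpleGraph (Fin 5)) G ∧
  ¬ IsMinor (completeBipartiteGraph (Fin 3) (Fin 3)) G

/-- Outerplanarity, via the forbidden-minor characterization. -/
def IsOuterplanar {β : Type*} (G : SimpleGraph β) : Prop :=
  ¬ IsMinor (⊤ : SimpleGraph (Fin 4)) G ∧
  ¬ IsMinor (completeBipartiteGraph (Fin 2) (Fin 3)) G

/-- The spectral radius of a finite graph: the largest (adjacency) eigenvalue. -/
noncomputable def specRad {V : Type*} [Fintype V] (G : SimpleGraph V) : ℝ :=
  haveI := Classical.decRel G.Adj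
  sSup {μ : ℝ | ∃ x : V → ℝ, x ≠ 0 ∧ (G.adjMatrix ℝ).mulVec x = μ • x}

/-!
Listing the first path of `H`, one apex, the second path, the other apex and the third path
gives a path of order `n₀ + n₁ + n₂ + 2` in `K₂ ∨ H`, and a path of order at least `t * l` contains
`t` disjoint copies of `P_l` (cut it into consecutive blocks of `l` vertices). Hence
`n₀ + n₁ + n₂ + 2 < t * l`, which is the bound.
-/

theorem ContainsCopy.trans {α β γ : Type*} {F : SimpleGraph α} {G : SimpleGraph β}
    {K : SimpleGraph γ} (hFG : ContainsCopy F G) (hGK : ContainsCopy G K) : ContainsCopy F K := by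
  obtain ⟨f, hf, hfadj⟩ := hFG
  obtain ⟨g, hg, hgadj⟩ := hGK
  exact ⟨g ∘ f, hg.comp hf, fun a b h => hgadj _ _ (hfadj a b h)⟩

theorem containsCopy_pathGraph_of_injOn {V : Type*} {G : SimpleGraph V} {N : ℕ} (f : ℕ → V)
    (hinj : Set.InjOn f (Set.Iio N)) (hadj : ∀ k, k + 1 < N → G.Adj (f k) (f (k + 1))) :
    ContainsCopy (pathGraph N) G := by
  refine ⟨fun k => f k, fun j k h => Fin.ext (hinj j.isLt k.isLt h), fun j k hjk => ?_⟩
  rcases pathGraph_adj.mp hjk with h | h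
  · simpa [← h] using hadj j (h ▸ k.isLt)
  · simpa [← h] using (hadj k (h ▸ j.isLt)).symm

theorem containsCopy_tPaths_pathGraph {t l N : ℕ} (h : t * l ≤ N) :
    ContainsCopy (tPaths t l) (pathGraph N) := by
  refine ⟨fun p => Fin.castLE h (finProdFinEquiv p),
    (Fin.castLE_injective h).comp finProdFinEquiv.injective, fun p q hpq => ?_⟩
  rw [tPaths, fromRel_adj] at hpq
  obtain ⟨-, ⟨h₁, h₂⟩ | ⟨h₁, h₂⟩⟩ := hpq <;>
  · simp only [pathGraph_adj, Fin.val_castLE, finProdFinEquiv_apply_val, h₁]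
    omega

@[simp]
theorem cone_adj_none_some {β : Type*} (H : SimpleGraph β) (a : β) :
    (cone H).Adj none (some a) := by
  simp [cone]

@[simp]
theorem cone_adj_some_none {β : Type*} (H : SimpleGraph β) (a : β) :
    (cone H).Adj (some a) none :=
  (cone_adj_none_some H a).symm

@[simp]
theorem cone_adj_some_some {β : Type*} (H : SimpleGraph β) (a b : β) :
    (cone H).Adj (some a) (some b) ↔ H.Adj a b := by
  simp only [cone, fromRel_adj, ne_eq, Option.some.injEq, reduceCtorEq, false_or, exists_and_left,
    exists_eq_left']
  exact ⟨fun ⟨_, h⟩ => h.elim id .symm, fun h => ⟨h.ne, .inl h⟩⟩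

/-- The path `P_{n 0}`, the outer apex, `P_{n 1}`, the inner apex, `P_{n 2}`, in this order;
beyond the `n 0 + n 1 + n 2 + 2` vertices it runs on along the third component. -/
def coneConeTour (n : ℕ → ℕ) (k : ℕ) : Option (Option (ℕ × ℕ)) :=
  if k < n 0 then some (some (0, k))
  else if k = n 0 then none
  else if k < n 0 + 1 + n 1 then some (some (1, k - (n 0 + 1)))
  else if k = n 0 + 1 + n 1 then some none
  else some (some (2, k - (n 0 + n 1 + 2)))

theorem coneConeTour_injective (n : ℕ → ℕ) : Function.Injective (coneConeTour n) := by
  intro a b hab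
  unfold coneConeTour at hab
  split_ifs at hab <;> simp at hab <;> omega

theorem coneConeTour_adj (n : ℕ → ℕ) {k : ℕ} (hk : k + 1 < n 0 + n 1 + n 2 + 2) :
    (cone (cone (pathsUnion n))).Adj (coneConeTour n k) (coneConeTour n (k + 1)) := by
  unfold coneConeTour
  split_ifs <;> simp [pathsUnion] <;> omega

theorem containsCopy_pathGraph_cone_cone_pathsUnion (n : ℕ → ℕ) :
    ContainsCopy (pathGraph (n 0 + n 1 + n 2 + 2)) (cone (cone (pathsUnion n))) :=
  containsCopy_pathGraph_of_injOn (coneConeTour n) (coneConeTour_injective n).injOn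
    fun _ => coneConeTour_adj n

theorem K2_join_linearForest_tPl_free_general (t l : ℕ) (n : ℕ → ℕ)
    (hfree : ¬ ContainsCopy (tPaths t l) (cone (cone (pathsUnion n)))) :
    n 0 + n 1 + n 2 ≤ (t - 3) * l + 3 * (l - 1) := by
  by_contra! hlong
  have htl : t * l ≤ n 0 + n 1 + n 2 + 2 := by
    have : t * l ≤ (t - 3) * l + 3 * l := by
      rw [← add_mul]
      exact Nat.mul_le_mul_right l (by omega)
    omega
  exact hfree <|
    (containsCopy_tPaths_pathGraph htl).trans (containsCopy_pathGraph_cone_cone_pathsUnion n)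

theorem K2_join_linearForest_tPl_free (t l : ℕ) (ht : 3 ≤ t) (hl : 3 ≤ l)
    (n : ℕ → ℕ) (hmono : Antitone n)
    (hfree : ¬ ContainsCopy (tPaths t l) (cone (cone (pathsUnion n)))) :
    n 0 + n 1 + n 2 ≤ (t - 3) * l + 3 * (l - 1) :=
  K2_join_linearForest_tPl_free_general t l n hfree
end

section
/- Let H be a disjoint union of paths whose longest two paths have orders n1 ≥ n2 ≥ 1, let u be the apex vertex of G = K1 ∨ H, and let P' be the longest path in G. Then the longest path of K1 ∨ H has exactly n1 + n2 + 1 vertices, and K1 ∨ (P_{n1} ∪ P_{n2}) contains a path P_i for every i with 3 ≤ i ≤ n1 + n2 + 1. -/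
open SimpleGraph

section Auxiliary

lemma pu_adj {n : ℕ → ℕ} {x y : ℕ × ℕ} (h : (pathsUnion n).Adj x y) :
    x.1 = y.1 ∧ x.2 < n x.1 ∧ y.2 < n x.1 := by
  rw [pathsUnion, fromRel_adj] at h
  obtain ⟨hne, ⟨h1, h2, h3⟩ | ⟨h1, h2, h3⟩⟩ := h
  · exact ⟨h1, by omega, by omega⟩
  · refine ⟨h1.symm, ?_, ?_⟩ <;> rw [h1.symm] <;> omega

lemma pu_adj_mk {n : ℕ → ℕ} {c j : ℕ} (hj : j + 1 < n c) :
    (pathsUnion n).Adj (c, j) (c, j + 1) := by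
  rw [pathsUnion, fromRel_adj]
  exact ⟨by simp, Or.inl ⟨rfl, rfl, hj⟩⟩

lemma cone_none {β : Type*} {H : SimpleGraph β} (a : β) : (cone H).Adj none (some a) := by
  rw [cone, fromRel_adj]
  exact ⟨by simp, Or.inl (Or.inl rfl)⟩

lemma cone_some {β : Type*} {H : SimpleGraph β} {a b : β} (h : H.Adj a b) :
    (cone H).Adj (some a) (some b) := by
  rw [cone, fromRel_adj]
  exact ⟨by simpa using h.ne, Or.inl (Or.inr ⟨a, b, rfl, rfl, h⟩)⟩

lemma cone_some_rev {β : Type*} {H : SimpleGraph β} {a b : β}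
    (h : (cone H).Adj (some a) (some b)) : H.Adj a b := by
  rw [cone, fromRel_adj] at h
  obtain ⟨hne, h | h⟩ := h
  · rcases h with h | ⟨a', b', ha, hb, h⟩
    · simp at h
    · simp only [Option.some.injEq] at ha hb; subst ha; subst hb; exact h
  · rcases h with h | ⟨a', b', ha, hb, h⟩
    · simp at h
    · simp only [Option.some.injEq] at ha hb; subst ha; subst hb; exact h.symm

lemma embed_path (n : ℕ → ℕ) (a b : ℕ) (ha1 : 1 ≤ a) (ha : a ≤ n 0) (hb : b ≤ n 1) :
    ContainsCopy (pathGraph (a + b + 1)) (cone (pathsUnion n)) := by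
  refine ⟨fun k => if (k : ℕ) < a then some (0, (k : ℕ)) else if (k : ℕ) = a then none
      else some (1, (k : ℕ) - (a + 1)), ?_, ?_⟩
  · intro u v huv
    apply Fin.ext
    simp only at huv
    split_ifs at huv <;> simp_all [Prod.ext_iff] <;> omega
  · have key : ∀ u v : Fin (a + b + 1), (u : ℕ) + 1 = (v : ℕ) →
        (cone (pathsUnion n)).Adj
          (if (u : ℕ) < a then some ((0 : ℕ), (u : ℕ)) else if (u : ℕ) = a then none
            else some (1, (u : ℕ) - (a + 1)))
          (if (v : ℕ) < a then some ((0 : ℕ), (v : ℕ)) else if (v : ℕ) = a then none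
            else some (1, (v : ℕ) - (a + 1))) := by
      intro u v huv
      rcases lt_trichotomy ((u : ℕ) + 1) a with h | h | h
      · rw [if_pos (by omega : (u : ℕ) < a), if_pos (by omega : (v : ℕ) < a), ← huv]
        exact cone_some (pu_adj_mk (by omega))
      · rw [if_pos (by omega : (u : ℕ) < a), if_neg (by omega : ¬ (v : ℕ) < a),
          if_pos (by omega : (v : ℕ) = a)]
        exact (cone_none _).symm
      · rcases eq_or_lt_of_le (show a ≤ (u : ℕ) by omega) with h5 | h5
        · rw [if_neg (by omega), if_pos h5.symm, if_neg (by omega), if_neg (by omega)]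
          exact cone_none _
        · rw [if_neg (by omega), if_neg (by omega), if_neg (by omega), if_neg (by omega)]
          have hv : (v : ℕ) - (a + 1) = ((u : ℕ) - (a + 1)) + 1 := by omega
          rw [hv]
          refine cone_some (pu_adj_mk ?_)
          have : (v : ℕ) < a + b + 1 := v.isLt
          omega
    intro u v huv
    rw [pathGraph_adj] at huv
    rcases huv with h | h
    · exact key u v h
    · exact (key v u h).symm

/-- On a segment `[lo, hi)` of at least two vertices joined consecutively in
`pathsUnion n`, all vertices share the first coordinate of `g lo` and have second
coordinate `< n (g lo).1`; consequently the segment has at most `n (g lo).1` vertices. -/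
lemma seg_bound (n : ℕ → ℕ) (g : ℕ → ℕ × ℕ) (lo hi : ℕ) (hlh : lo + 1 < hi)
    (hinj : Set.InjOn g (Set.Ico lo hi))
    (hadj : ∀ k, lo ≤ k → k + 1 < hi → (pathsUnion n).Adj (g k) (g (k + 1))) :
    (∀ k, lo ≤ k → k < hi → (g k).1 = (g lo).1 ∧ (g k).2 < n (g lo).1) ∧
    hi - lo ≤ n (g lo).1 := by
  set c := (g lo).1 with hc
  have claim1 : ∀ k, lo ≤ k → k < hi → (g k).1 = c := by
    intro k hk
    induction k, hk using Nat.le_induction with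
    | base => intro _; rfl
    | succ k hk ih =>
      intro hk1
      have h := pu_adj (hadj k hk hk1)
      rw [← h.1]
      exact ih (by omega)
  have claim2 : ∀ k, lo ≤ k → k < hi → (g k).2 < n c := by
    intro k hk hk1
    by_cases h : k + 1 < hi
    · have hp := pu_adj (hadj k hk h)
      rw [claim1 k hk hk1] at hp
      exact hp.2.1
    · have hk2 : lo ≤ k - 1 := by omega
      have := hadj (k - 1) hk2 (by omega)
      rw [Nat.sub_add_cancel (by omega : 1 ≤ k)] at this
      have hp := pu_adj this
      rw [claim1 (k - 1) hk2 (by omega)] at hp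
      exact hp.2.2
  refine ⟨fun k hk hk1 => ⟨claim1 k hk hk1, claim2 k hk hk1⟩, ?_⟩
  have hcard : (Finset.Ico lo hi).card ≤ (Finset.range (n c)).card := by
    apply Finset.card_le_card_of_injOn (fun k => (g k).2)
    · intro k hk
      rw [Finset.mem_coe, Finset.mem_Ico] at hk
      rw [Finset.mem_coe, Finset.mem_range]
      exact claim2 k hk.1 hk.2
    · intro x hx y hy hxy
      rw [Finset.mem_coe, Finset.mem_Ico] at hx hy
      apply hinj (Set.mem_Ico.mpr hx) (Set.mem_Ico.mpr hy)
      exact Prod.ext (by rw [claim1 x hx.1 hx.2, claim1 y hy.1 hy.2]) hxy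
  simpa using hcard

lemma no_long_path (n : ℕ → ℕ) (hmono : Antitone n) (h2 : 1 ≤ n 1) :
    ¬ ContainsCopy (pathGraph (n 0 + n 1 + 2)) (cone (pathsUnion n)) := by
  intro hcontra
  have h1 : 1 ≤ n 0 := h2.trans (hmono (Nat.zero_le 1))
  set N := n 0 + n 1 + 2 with hN
  obtain ⟨f, hinj, hadj⟩ := hcontra
  have hN4 : 4 ≤ N := by omega
  have hstep : ∀ k (hk : k + 1 < N),
      (cone (pathsUnion n)).Adj (f ⟨k, by omega⟩) (f ⟨k + 1, hk⟩) := by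
    intro k hk
    exact hadj ⟨k, by omega⟩ ⟨k + 1, hk⟩ (pathGraph_adj.mpr (Or.inl rfl))
  classical
  set g : ℕ → ℕ × ℕ := fun k => (if h : k < N then f ⟨k, h⟩ else none).getD (0, 0) with hg
  have hsome : ∀ k (hk : k < N), f ⟨k, hk⟩ ≠ none → f ⟨k, hk⟩ = some (g k) := by
    intro k hk hne
    rw [hg]
    simp only [hk, dif_pos]
    cases hfk : f ⟨k, hk⟩ with
    | none => exact absurd hfk hne
    | some x => simp [hfk]
  by_cases hap : ∃ p, ∃ hp : p < N, f ⟨p, hp⟩ = none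
  · obtain ⟨p, hp, hfp⟩ := hap
    have hnone : ∀ k (hk : k < N), k ≠ p → f ⟨k, hk⟩ ≠ none := by
      intro k hk hkp h
      exact hkp (Fin.mk_eq_mk.mp (hinj (h.trans hfp.symm)))
    have hsome' : ∀ k (hk : k < N), k ≠ p → f ⟨k, hk⟩ = some (g k) :=
      fun k hk hkp => hsome k hk (hnone k hk hkp)
    have hginj : ∀ x (hx : x < N) y (hy : y < N), x ≠ p → y ≠ p → g x = g y → x = y := by
      intro x hx y hy hxp hyp hxy
      have := hinj (a₁ := ⟨x, hx⟩) (a₂ := ⟨y, hy⟩)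
        (by rw [hsome' x hx hxp, hsome' y hy hyp, hxy])
      exact Fin.mk_eq_mk.mp this
    have hseg : ∀ k, k + 1 < N → k + 1 ≠ p → k ≠ p → (pathsUnion n).Adj (g k) (g (k + 1)) := by
      intro k hk hk1p hkp
      have := hstep k hk
      rw [hsome' k (by omega) hkp, hsome' (k + 1) hk hk1p] at this
      exact cone_some_rev this
    have bound1 : 2 ≤ p →
        (∀ k, k < p → (g k).1 = (g 0).1 ∧ (g k).2 < n (g 0).1) ∧ p ≤ n (g 0).1 := by
      intro h2p
      have := seg_bound n g 0 p (by omega)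
        (by
          intro x hx y hy hxy
          rw [Set.mem_Ico] at hx hy
          exact hginj x (by omega) y (by omega) (by omega) (by omega) hxy)
        (fun k hk hk1 => hseg k (by omega) (by omega) (by omega))
      exact ⟨fun k hk => (this.1 k (Nat.zero_le k) hk), by omega⟩
    have bound2 : p + 2 + 1 ≤ N →
        (∀ k, p + 1 ≤ k → k < N → (g k).1 = (g (p + 1)).1 ∧ (g k).2 < n (g (p + 1)).1) ∧
          N - (p + 1) ≤ n (g (p + 1)).1 := by
      intro h2q
      have := seg_bound n g (p + 1) N (by omega)
        (by
          intro x hx y hy hxy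
          rw [Set.mem_Ico] at hx hy
          exact hginj x (by omega) y (by omega) (by omega) (by omega) hxy)
        (fun k hk hk1 => hseg k (by omega) (by omega) (by omega))
      exact ⟨fun k hk hk1 => this.1 k hk hk1, this.2⟩
    rcases le_or_gt p 1 with hps | hps
    · have hb := bound2 (by omega)
      have : N - (p + 1) ≤ n 0 := hb.2.trans (hmono (Nat.zero_le _))
      omega
    rcases le_or_gt (N - 1 - p) 1 with hqs | hqs
    · have hb := bound1 (by omega)
      have : p ≤ n 0 := hb.2.trans (hmono (Nat.zero_le _))
      omega
    · have hb1 := bound1 (by omega)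
      have hb2 := bound2 (by omega)
      set c1 := (g 0).1 with hc1
      set c2 := (g (p + 1)).1 with hc2
      by_cases hcc : c1 = c2
      · have hall : ∀ k, k < N → k ≠ p → (g k).1 = c1 ∧ (g k).2 < n c1 := by
          intro k hk hkp
          rcases lt_or_ge k p with h | h
          · exact hb1.1 k h
          · rw [hcc]; exact hb2.1 k (by omega) hk
        have hcard : ((Finset.range N).erase p).card ≤ (Finset.range (n c1)).card := by
          apply Finset.card_le_card_of_injOn (fun k => (g k).2)
          · intro k hk
            rw [Finset.mem_coe, Finset.mem_erase, Finset.mem_range] at hk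
            rw [Finset.mem_coe, Finset.mem_range]
            exact (hall k hk.2 hk.1).2
          · intro x hx y hy hxy
            rw [Finset.mem_coe, Finset.mem_erase, Finset.mem_range] at hx hy
            apply hginj x hx.2 y hy.2 hx.1 hy.1
            exact Prod.ext (by rw [(hall x hx.2 hx.1).1, (hall y hy.2 hy.1).1]) hxy
        rw [Finset.card_erase_of_mem (Finset.mem_range.mpr hp), Finset.card_range,
          Finset.card_range] at hcard
        have : n c1 ≤ n 0 := hmono (Nat.zero_le _)
        omega
      · have hc1le : n c1 ≤ n 0 := hmono (Nat.zero_le _)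
        have hc2le : n c2 ≤ n 0 := hmono (Nat.zero_le _)
        have : n c1 ≤ n 1 ∨ n c2 ≤ n 1 := by
          rcases Nat.eq_zero_or_pos c1 with h | h
          · exact Or.inr (hmono (by omega))
          · exact Or.inl (hmono h)
        have hb1' := hb1.2
        have hb2' := hb2.2
        omega
  · push_neg at hap
    have hsome' : ∀ k (hk : k < N), f ⟨k, hk⟩ = some (g k) :=
      fun k hk => hsome k hk (hap k hk)
    have hginj : ∀ x (hx : x < N) y (hy : y < N), g x = g y → x = y := by
      intro x hx y hy hxy
      have := hinj (a₁ := ⟨x, hx⟩) (a₂ := ⟨y, hy⟩)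
        (by rw [hsome' x hx, hsome' y hy, hxy])
      exact Fin.mk_eq_mk.mp this
    have := seg_bound n g 0 N (by omega)
      (by
        intro x hx y hy hxy
        rw [Set.mem_Ico] at hx hy
        exact hginj x (by omega) y (by omega) hxy)
      (fun k hk hk1 => by
        have := hstep k hk1
        rw [hsome' k (by omega), hsome' (k + 1) hk1] at this
        exact cone_some_rev this)
    have : N ≤ n 0 := by
      have h := this.2
      have : n (g 0).1 ≤ n 0 := hmono (Nat.zero_le _)
      omega
    omega

end Auxiliary

theorem K1_join_longest_path (n : ℕ → ℕ) (hmono : Antitone n) (h2 : 1 ≤ n 1) :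
    ContainsCopy (pathGraph (n 0 + n 1 + 1)) (cone (pathsUnion n)) ∧
    ¬ ContainsCopy (pathGraph (n 0 + n 1 + 2)) (cone (pathsUnion n)) ∧
    ∀ i, 3 ≤ i → i ≤ n 0 + n 1 + 1 →
      ContainsCopy (pathGraph i)
        (cone (pathsUnion (fun j => if j < 2 then n j else 0))) := by
  have h1 : 1 ≤ n 0 := h2.trans (hmono (Nat.zero_le 1))
  refine ⟨embed_path n (n 0) (n 1) h1 le_rfl le_rfl, no_long_path n hmono h2, ?_⟩
  intro i h3 hi
  set n' : ℕ → ℕ := fun j => if j < 2 then n j else 0 with hn'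
  have e0 : n' 0 = n 0 := rfl
  have e1 : n' 1 = n 1 := rfl
  set a := min (i - 1) (n 0) with ha
  have hkey := embed_path n' a (i - 1 - a) (by omega) (by omega) (by omega)
  have heq : a + (i - 1 - a) + 1 = i := by omega
  rw [heq] at hkey
  exact hkey
end
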